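/- arXiv:1906.10582 — 3 statements merged into one kernel-verified Lean document; each statement's English description precedes it below -/
import Mathlib

section
/- Let M > 0 and let f : ℝ^k → ℝ be a continuous function satisfying |f(x)| ≤ M(1 + |x|) for all x ∈ ℝ^k. If (x_n)_{n ∈ ℕ} is a sequence in ℝ^k converging to x ∈ ℝ^k, then f_n(x_n) → f(x) as n → ∞ (where f_n is defined for n ≥ M). -/
/-- The set of points of `ℝ^k` with rational coordinates. -/
def ratPts (k : ℕ) : Set (EuclideanSpace ℝ (Fin k)) :=
  {y | ∀ i, ∃ q : ℚ, y i = (q : ℝ)}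

/-- The inf-convolution `f_n(x) = inf_{y ∈ ℚ^k} (f(y) + n·|x − y|)`. -/
noncomputable def infConv {k : ℕ} (f : EuclideanSpace ℝ (Fin k) → ℝ) (n : ℝ)
    (x : EuclideanSpace ℝ (Fin k)) : ℝ :=
  sInf ((fun y => f y + n * ‖x - y‖) '' ratPts k)

/-!
Testing the infimum at rational points `y` close to `x` gives `f_n(x) ≤ f(x) + o(1)`, since
`y ↦ f y + n ‖x - y‖` is continuous and `ℚ^k` is dense. Conversely, points `y` near `x₀` contribute
at least `f x₀ - ε` by continuity, while for far points the penalty `n ‖x - y‖`, comparable to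
`n ‖y - x₀‖`, beats the at most linear decay `-M (1 + ‖y‖)` of `f` once `n` is large.
-/

open Filter Topology Set

theorem dense_ratPts (k : ℕ) : Dense (ratPts k) := by
  have hpi : Dense (univ.pi fun _ : Fin k => range ((↑) : ℚ → ℝ)) :=
    dense_pi _ fun _ _ => Rat.denseRange_cast
  convert hpi.preimage (EuclideanSpace.equiv (Fin k) ℝ).toHomeomorph.isOpenMap using 1
  ext y
  simp [ratPts, eq_comm]

section InfConvolution

variable {E : Type*} [SeminormedAddCommGroup E] {f : E → ℝ} {M : ℝ} {x₀ : E}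

theorem eventually_le_add_mul_norm_sub (hM : 0 ≤ M) (hf : ContinuousAt f x₀)
    (hgrow : ∀ y, -(M * (1 + ‖y‖)) ≤ f y) {a : ℝ} (ha : a < f x₀) :
    ∀ᶠ p : E × ℝ in 𝓝 x₀ ×ˢ atTop, ∀ y, a ≤ f y + p.2 * ‖p.1 - y‖ := by
  obtain ⟨δ, hδ, hnear⟩ := Metric.eventually_nhds_iff.1 (hf.eventually (lt_mem_nhds ha))
  set b := a + M * (1 + ‖x₀‖)
  filter_upwards [prod_mem_prod (Metric.ball_mem_nhds x₀ (half_pos hδ))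
    (Ici_mem_atTop (2 * (M + |b| / δ)))] with ⟨x, c⟩ ⟨hx, hc⟩ y
  rw [Metric.mem_ball, dist_eq_norm] at hx
  rw [mem_Ici] at hc
  have hbδ : 0 ≤ |b| / δ := by positivity
  by_cases hy : dist y x₀ < δ
  · have := hnear hy
    nlinarith [norm_nonneg (x - y)]
  · rw [not_lt, dist_eq_norm] at hy
    have hxy : ‖y - x₀‖ / 2 ≤ ‖x - y‖ := by
      have := norm_sub_le_norm_sub_add_norm_sub y x x₀
      rw [norm_sub_rev y x] at this
      linarith
    have hy₀ : ‖y‖ ≤ ‖x₀‖ + ‖y - x₀‖ := by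
      simpa [add_comm] using norm_le_norm_add_norm_sub' y x₀
    have hb : b ≤ (c / 2 - M) * ‖y - x₀‖ :=
      calc b ≤ |b| / δ * δ := by rw [div_mul_cancel₀ _ hδ.ne']; exact le_abs_self b
        _ ≤ (c / 2 - M) * ‖y - x₀‖ := mul_le_mul (by linarith) hy hδ.le (by linarith)
    nlinarith [hgrow y, mul_le_mul_of_nonneg_left hxy (by linarith : 0 ≤ c),
      mul_le_mul_of_nonneg_left hy₀ hM]

theorem tendsto_sInf_image_add_mul_norm_sub {D : Set E} (hD : Dense D) (hM : 0 ≤ M)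
    (hf : Continuous f) (hgrow : ∀ y, -(M * (1 + ‖y‖)) ≤ f y) :
    Tendsto (fun p : E × ℝ => sInf ((fun y => f y + p.2 * ‖p.1 - y‖) '' D))
      (𝓝 x₀ ×ˢ atTop) (𝓝 (f x₀)) := by
  rw [tendsto_order]
  constructor
  · intro a ha
    obtain ⟨b, hab, hb⟩ := exists_between ha
    filter_upwards [eventually_le_add_mul_norm_sub hM hf.continuousAt hgrow hb] with p hp
    exact hab.trans_le (le_csInf (hD.nonempty.image _) (forall_mem_image.2 fun y _ => hp y))
  · intro a ha
    have hfa : ∀ᶠ p : E × ℝ in 𝓝 x₀ ×ˢ atTop, f p.1 < a :=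
      tendsto_fst.eventually (hf.continuousAt.eventually (gt_mem_nhds ha))
    filter_upwards [hfa, eventually_le_add_mul_norm_sub hM hf.continuousAt hgrow
      (sub_one_lt (f x₀))] with p hfp hbdd
    obtain ⟨y, hyD, hya⟩ := hD.exists_mem_open (isOpen_lt (by fun_prop) continuous_const)
      (⟨p.1, by simpa using hfp⟩ : {y | f y + p.2 * ‖p.1 - y‖ < a}.Nonempty)
    exact (csInf_le ⟨_, forall_mem_image.2 fun y _ => hbdd y⟩ (mem_image_of_mem _ hyD)).trans_lt
      hya

end InfConvolution

theorem statement_5 {k : ℕ} (M : ℝ) (hM : 0 < M)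
    (f : EuclideanSpace ℝ (Fin k) → ℝ) (hf : Continuous f)
    (hgrow : ∀ x, |f x| ≤ M * (1 + ‖x‖))
    (x : ℕ → EuclideanSpace ℝ (Fin k)) (x₀ : EuclideanSpace ℝ (Fin k))
    (hx : Filter.Tendsto x Filter.atTop (nhds x₀)) :
    Filter.Tendsto (fun n : ℕ => infConv f (n : ℝ) (x n)) Filter.atTop (nhds (f x₀)) := by
  have hlower : ∀ y, -(M * (1 + ‖y‖)) ≤ f y := fun y => neg_le_of_abs_le (hgrow y)
  have h := (tendsto_sInf_image_add_mul_norm_sub (dense_ratPts k) hM.le hf hlower).comp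
    (hx.prodMk tendsto_natCast_atTop_atTop)
  exact h
end

section
/- Let T > 0, β > 0, and let f : Δ → ℝ^k be a jointly measurable function on Δ = {(t, s) ∈ [0, T]² : t ≤ s} with ∫_0^T ∫_t^T e^{βs} |f(t, s)|² ds dt < ∞. Then ∫_0^T ∫_t^T β e^{βs} |∫_s^T f(t, u) du|² ds dt ≤ (4/β) ∫_0^T ∫_t^T e^{βs} |f(t, s)|² ds dt. -/
/-!
Fix `t` and write `g = f t ·`. Cauchy–Schwarz with the weight `e^{βu/2}` gives
`|∫_s^T g|² ≤ (2/β) e^{-βs/2} ∫_s^T e^{βu/2} |g u|² du`, so the left-hand side is at most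
`∫_t^T 2 e^{βs/2} ∫_s^T e^{βu/2} |g u|² du ds`. Exchanging the order of integration and using
`∫_t^u 2 e^{βs/2} ds ≤ (4/β) e^{βu/2}` bounds this by `(4/β) ∫_t^T e^{βu} |g u|² du`;
integrating over `t` finishes the proof.
-/

open MeasureTheory Set Real
open scoped ENNReal

section CauchySchwarz

variable {α : Type*} [MeasurableSpace α] {μ : Measure α}

theorem sq_lintegral_mul_le {f g : α → ℝ≥0∞} (hf : AEMeasurable f μ) (hg : AEMeasurable g μ) :
    (∫⁻ a, f a * g a ∂μ) ^ 2 ≤ (∫⁻ a, f a ^ 2 ∂μ) * ∫⁻ a, g a ^ 2 ∂μ := by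
  have hpq : Real.HolderConjugate 2 2 := by constructor <;> norm_num
  have hsq : ∀ x : ℝ≥0∞, (x ^ (1 / 2 : ℝ)) ^ 2 = x := fun x => by
    rw [← ENNReal.rpow_natCast, ← ENNReal.rpow_mul]; norm_num
  have hrpow : ∀ φ : α → ℝ≥0∞, ∫⁻ a, φ a ^ (2 : ℝ) ∂μ = ∫⁻ a, φ a ^ 2 ∂μ := fun φ =>
    lintegral_congr fun a => ENNReal.rpow_ofNat (φ a) 2
  calc (∫⁻ a, f a * g a ∂μ) ^ 2
      ≤ ((∫⁻ a, f a ^ (2 : ℝ) ∂μ) ^ (1 / 2 : ℝ) * (∫⁻ a, g a ^ (2 : ℝ) ∂μ) ^ (1 / 2 : ℝ)) ^ 2 :=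
        pow_le_pow_left₀ zero_le (ENNReal.lintegral_mul_le_Lp_mul_Lq μ hpq hf hg) 2
    _ = (∫⁻ a, f a ^ 2 ∂μ) * ∫⁻ a, g a ^ 2 ∂μ := by rw [mul_pow, hsq, hsq, hrpow, hrpow]

theorem sq_lintegral_le_lintegral_inv_mul_lintegral_mul {w f : α → ℝ≥0∞}
    (hw : AEMeasurable w μ) (hf : AEMeasurable f μ) (hw0 : ∀ a, w a ≠ 0) (hwt : ∀ a, w a ≠ ∞) :
    (∫⁻ a, f a ∂μ) ^ 2 ≤ (∫⁻ a, (w a)⁻¹ ∂μ) * ∫⁻ a, w a * f a ^ 2 ∂μ := by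
  set r : α → ℝ≥0∞ := fun a => w a ^ (1 / 2 : ℝ)
  have hr : ∀ a, r a ^ 2 = w a := fun a => by
    rw [← ENNReal.rpow_natCast, ← ENNReal.rpow_mul]; norm_num
  have hr0 : ∀ a, r a ≠ 0 := fun a h => hw0 a (by rw [← hr, h, zero_pow two_ne_zero])
  have hrt : ∀ a, r a ≠ ∞ := fun a h => hwt a (by rw [← hr, h, ENNReal.top_pow two_ne_zero])
  have hrm : AEMeasurable r μ := hw.pow_const _
  calc (∫⁻ a, f a ∂μ) ^ 2 = (∫⁻ a, (r a)⁻¹ * (r a * f a) ∂μ) ^ 2 := by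
        simp_rw [← mul_assoc, ENNReal.inv_mul_cancel (hr0 _) (hrt _), one_mul]
    _ ≤ (∫⁻ a, (r a)⁻¹ ^ 2 ∂μ) * ∫⁻ a, (r a * f a) ^ 2 ∂μ :=
        sq_lintegral_mul_le hrm.inv (hrm.mul hf)
    _ = (∫⁻ a, (w a)⁻¹ ∂μ) * ∫⁻ a, w a * f a ^ 2 ∂μ := by
        simp_rw [← ENNReal.inv_pow, mul_pow, hr]

end CauchySchwarz

theorem lintegral_Ioi_ofReal_exp_mul {a : ℝ} (ha : a < 0) (c : ℝ) :
    ∫⁻ x in Ioi c, ENNReal.ofReal (exp (a * x)) = ENNReal.ofReal (-exp (a * c) / a) := by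
  rw [← ofReal_integral_eq_lintegral_ofReal (integrableOn_exp_mul_Ioi ha c)
    (ae_of_all _ fun _ => (exp_pos _).le), integral_exp_mul_Ioi ha]

theorem lintegral_Iic_ofReal_exp_mul {a : ℝ} (ha : 0 < a) (c : ℝ) :
    ∫⁻ x in Iic c, ENNReal.ofReal (exp (a * x)) = ENNReal.ofReal (exp (a * c) / a) := by
  rw [← ofReal_integral_eq_lintegral_ofReal (integrableOn_exp_mul_Iic ha c)
    (ae_of_all _ fun _ => (exp_pos _).le), integral_exp_mul_Iic ha]

theorem setLIntegral_Icc_ofReal_exp_mul_le {c : ℝ} (hc : 0 < c) (a u : ℝ) :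
    ∫⁻ s in Icc a u, ENNReal.ofReal (exp (c * s)) ≤ ENNReal.ofReal (exp (c * u) / c) :=
  (lintegral_mono_set Icc_subset_Iic_self).trans_eq (lintegral_Iic_ofReal_exp_mul hc u)

theorem setLIntegral_Icc_indicator_Ici {μ : Measure ℝ} {a b s : ℝ} (hs : a ≤ s) (φ : ℝ → ℝ≥0∞) :
    ∫⁻ u in Icc a b, (Ici s).indicator φ u ∂μ = ∫⁻ u in Icc s b, φ u ∂μ := by
  rw [setLIntegral_indicator measurableSet_Ici]
  congr 2
  ext u
  simp only [mem_inter_iff, mem_Ici, mem_Icc]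
  constructor
  · rintro ⟨hsu, -, hub⟩; exact ⟨hsu, hub⟩
  · rintro ⟨hsu, hub⟩; exact ⟨hsu, hs.trans hsu, hub⟩

theorem setLIntegral_Icc_indicator_Iic {μ : Measure ℝ} {a b u : ℝ} (hu : u ≤ b) (φ : ℝ → ℝ≥0∞) :
    ∫⁻ s in Icc a b, (Iic u).indicator φ s ∂μ = ∫⁻ s in Icc a u, φ s ∂μ := by
  rw [setLIntegral_indicator measurableSet_Iic]
  congr 2
  ext s
  simp only [mem_inter_iff, mem_Iic, mem_Icc]
  constructor
  · rintro ⟨hsu, has, -⟩; exact ⟨has, hsu⟩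
  · rintro ⟨has, hsu⟩; exact ⟨hsu, has, hsu.trans hu⟩

/-- Fubini on the triangle `a ≤ s ≤ u ≤ b`. -/
theorem setLIntegral_Icc_mul_setLIntegral_Icc {μ : Measure ℝ} [SFinite μ] {c h : ℝ → ℝ≥0∞}
    (hc : Measurable c) (hh : Measurable h) (a b : ℝ) :
    ∫⁻ s in Icc a b, c s * ∫⁻ u in Icc s b, h u ∂μ ∂μ
      = ∫⁻ u in Icc a b, (∫⁻ s in Icc a u, c s ∂μ) * h u ∂μ := by
  set F : ℝ → ℝ → ℝ≥0∞ := fun s u =>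
    {p : ℝ × ℝ | p.1 ≤ p.2}.indicator (fun p => c p.1 * h p.2) (s, u)
  have hF : Measurable (Function.uncurry F) :=
    ((hc.comp measurable_fst).mul (hh.comp measurable_snd)).indicator
      (measurableSet_le measurable_fst measurable_snd)
  calc ∫⁻ s in Icc a b, c s * ∫⁻ u in Icc s b, h u ∂μ ∂μ
      = ∫⁻ s in Icc a b, ∫⁻ u in Icc a b, F s u ∂μ ∂μ := by
        refine setLIntegral_congr_fun measurableSet_Icc fun s hs => ?_
        rw [← lintegral_const_mul _ hh, ← setLIntegral_Icc_indicator_Ici hs.1]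
        rfl
    _ = ∫⁻ u in Icc a b, ∫⁻ s in Icc a b, F s u ∂μ ∂μ := lintegral_lintegral_swap hF.aemeasurable
    _ = ∫⁻ u in Icc a b, (∫⁻ s in Icc a u, c s ∂μ) * h u ∂μ := by
        refine setLIntegral_congr_fun measurableSet_Icc fun u hu => ?_
        rw [← lintegral_mul_const _ hc, ← setLIntegral_Icc_indicator_Iic hu.2]
        rfl

section WeightedHardy

variable {E : Type*} [NormedAddCommGroup E] [NormedSpace ℝ E] [MeasurableSpace E]
  [OpensMeasurableSpace E] {g : ℝ → E}

theorem enorm_setIntegral_Icc_sq_le {c : ℝ} (hc : 0 < c) (hg : Measurable g) (s T : ℝ) :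
    ‖∫ u in Icc s T, g u‖ₑ ^ 2
      ≤ ENNReal.ofReal (exp (-(c * s)) / c) *
          ∫⁻ u in Icc s T, ENNReal.ofReal (exp (c * u)) * ‖g u‖ₑ ^ 2 := by
  have hinv : ∫⁻ u in Icc s T, (ENNReal.ofReal (exp (c * u)))⁻¹
      ≤ ENNReal.ofReal (exp (-(c * s)) / c) := calc
    _ = ∫⁻ u in Icc s T, ENNReal.ofReal (exp (-c * u)) := by
        simp_rw [← ENNReal.ofReal_inv_of_pos (exp_pos _), ← exp_neg, neg_mul]
    _ ≤ ∫⁻ u in Ioi s, ENNReal.ofReal (exp (-c * u)) :=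
        (lintegral_mono_set Icc_subset_Ici_self).trans_eq (setLIntegral_congr Ioi_ae_eq_Ici.symm)
    _ = ENNReal.ofReal (exp (-(c * s)) / c) := by
        rw [lintegral_Ioi_ofReal_exp_mul (neg_neg_of_pos hc), neg_div_neg_eq, neg_mul]
  calc ‖∫ u in Icc s T, g u‖ₑ ^ 2 ≤ (∫⁻ u in Icc s T, ‖g u‖ₑ) ^ 2 :=
        pow_le_pow_left₀ zero_le (enorm_integral_le_lintegral_enorm _) 2
    _ ≤ (∫⁻ u in Icc s T, (ENNReal.ofReal (exp (c * u)))⁻¹) *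
          ∫⁻ u in Icc s T, ENNReal.ofReal (exp (c * u)) * ‖g u‖ₑ ^ 2 :=
        sq_lintegral_le_lintegral_inv_mul_lintegral_mul (by fun_prop) hg.enorm.aemeasurable
          (fun _ => ENNReal.ofReal_ne_zero_iff.mpr (exp_pos _)) (fun _ => ENNReal.ofReal_ne_top)
    _ ≤ _ := by gcongr

theorem setLIntegral_ofReal_mul_enorm_setIntegral_sq_le {β : ℝ} (hβ : 0 < β) (hg : Measurable g)
    (a T : ℝ) :
    ∫⁻ s in Icc a T, ENNReal.ofReal (β * exp (β * s)) * ‖∫ u in Icc s T, g u‖ₑ ^ 2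
      ≤ ENNReal.ofReal (4 / β) * ∫⁻ s in Icc a T, ENNReal.ofReal (exp (β * s)) * ‖g s‖ₑ ^ 2 := by
  have hc : 0 < β / 2 := half_pos hβ
  set H : ℝ → ℝ≥0∞ := fun u => ENNReal.ofReal (exp (β / 2 * u)) * ‖g u‖ₑ ^ 2
  have hH : Measurable H := by fun_prop
  calc ∫⁻ s in Icc a T, ENNReal.ofReal (β * exp (β * s)) * ‖∫ u in Icc s T, g u‖ₑ ^ 2
      ≤ ∫⁻ s in Icc a T, 2 * (ENNReal.ofReal (exp (β / 2 * s)) * ∫⁻ u in Icc s T, H u) := by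
        refine lintegral_mono fun s => ?_
        grw [enorm_setIntegral_Icc_sq_le hc hg s T]
        rw [← mul_assoc, ← mul_assoc, ← ENNReal.ofReal_mul (by positivity),
          ← ENNReal.ofReal_ofNat 2, ← ENNReal.ofReal_mul zero_le_two]
        refine le_of_eq (congrArg (· * _) (congrArg ENNReal.ofReal ?_))
        rw [exp_neg, show β * s = β / 2 * s + β / 2 * s by ring, exp_add]
        field_simp
    _ = 2 * ∫⁻ u in Icc a T, (∫⁻ s in Icc a u, ENNReal.ofReal (exp (β / 2 * s))) * H u := by
        rw [lintegral_const_mul' _ _ ENNReal.ofNat_ne_top,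
          setLIntegral_Icc_mul_setLIntegral_Icc (by fun_prop) hH]
    _ ≤ 2 * ∫⁻ u in Icc a T, ENNReal.ofReal (exp (β / 2 * u) / (β / 2)) * H u := by
        gcongr with u
        exact setLIntegral_Icc_ofReal_exp_mul_le hc a u
    _ = ENNReal.ofReal (4 / β) * ∫⁻ s in Icc a T, ENNReal.ofReal (exp (β * s)) * ‖g s‖ₑ ^ 2 := by
        rw [← ENNReal.ofReal_ofNat 2, ← lintegral_const_mul' _ _ ENNReal.ofReal_ne_top,
          ← lintegral_const_mul' _ _ ENNReal.ofReal_ne_top]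
        refine lintegral_congr fun u => ?_
        rw [← mul_assoc, ← mul_assoc, ← mul_assoc, ← ENNReal.ofReal_mul (by positivity),
          ← ENNReal.ofReal_mul (by positivity), ← ENNReal.ofReal_mul (by positivity)]
        congr 2
        rw [show β * u = β / 2 * u + β / 2 * u by ring, exp_add]
        field_simp
        ring

end WeightedHardy

theorem ENNReal.ofReal_mul_norm_sq {E : Type*} [SeminormedAddGroup E] {r : ℝ} (hr : 0 ≤ r)
    (x : E) : ENNReal.ofReal (r * ‖x‖ ^ 2) = ENNReal.ofReal r * ‖x‖ₑ ^ 2 := by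
  rw [ENNReal.ofReal_mul hr, ENNReal.ofReal_pow (norm_nonneg _), ofReal_norm]

theorem statement_9_general {k : ℕ} (T β : ℝ) (hβ : 0 < β)
    (f : ℝ → ℝ → EuclideanSpace ℝ (Fin k))
    (hmeas : Measurable fun p : ℝ × ℝ => f p.1 p.2) :
    (∫⁻ t in Set.Icc 0 T, ∫⁻ s in Set.Icc t T,
        ENNReal.ofReal (β * Real.exp (β * s) * ‖∫ u in Set.Icc s T, f t u‖ ^ 2))
      ≤ ENNReal.ofReal (4 / β) *
        ∫⁻ t in Set.Icc 0 T, ∫⁻ s in Set.Icc t T,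
          ENNReal.ofReal (Real.exp (β * s) * ‖f t s‖ ^ 2) := by
  have hf : ∀ t, Measurable (f t) := fun t => hmeas.comp (measurable_const.prodMk measurable_id)
  simp only [ENNReal.ofReal_mul_norm_sq (exp_nonneg _),
    ENNReal.ofReal_mul_norm_sq (mul_nonneg hβ.le (exp_nonneg _))]
  rw [← lintegral_const_mul' _ _ ENNReal.ofReal_ne_top]
  exact lintegral_mono fun t => setLIntegral_ofReal_mul_enorm_setIntegral_sq_le hβ (hf t) t T

theorem statement_9 {k : ℕ} (T β : ℝ) (hT : 0 < T) (hβ : 0 < β)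
    (f : ℝ → ℝ → EuclideanSpace ℝ (Fin k))
    (hmeas : Measurable fun p : ℝ × ℝ => f p.1 p.2)
    (hfin : (∫⁻ t in Set.Icc 0 T, ∫⁻ s in Set.Icc t T,
        ENNReal.ofReal (Real.exp (β * s) * ‖f t s‖ ^ 2)) < ⊤) :
    (∫⁻ t in Set.Icc 0 T, ∫⁻ s in Set.Icc t T,
        ENNReal.ofReal (β * Real.exp (β * s) * ‖∫ u in Set.Icc s T, f t u‖ ^ 2))
      ≤ ENNReal.ofReal (4 / β) *
        ∫⁻ t in Set.Icc 0 T, ∫⁻ s in Set.Icc t T,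
          ENNReal.ofReal (Real.exp (β * s) * ‖f t s‖ ^ 2) :=
  statement_9_general T β hβ f hmeas
end

section
/- Let T > 0, β > 0, and let f : Δ → ℝ^k be a jointly measurable function on Δ = {(t, s) ∈ [0, T]² : t ≤ s} with ∫_0^T ∫_t^T e^{βs} |f(t, s)|² ds dt < ∞. Then ∫_0^T e^{βt} |∫_t^T f(t, s) ds|² dt ≤ (1/β) ∫_0^T ∫_t^T e^{βs} |f(t, s)|² ds dt. -/
/-!
For each fixed `t`, weighted Cauchy–Schwarz with weight `e^{βs}` gives
`|∫_t^T f(t,s) ds|² ≤ (∫_t^∞ e^{-βs} ds) · ∫_t^T e^{βs} |f(t,s)|² ds = (e^{-βt}/β) · ∫_t^T e^{βs} |f(t,s)|² ds`;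
multiplying by `e^{βt}` and integrating in `t` gives the claim.
-/

open MeasureTheory Real Set
open scoped ENNReal

theorem ENNReal.sq_lintegral_le_lintegral_inv_mul_lintegral_mul_sq {α : Type*} [MeasurableSpace α]
    {μ : Measure α} {f w : α → ℝ≥0∞} (hf : AEMeasurable f μ) (hw : AEMeasurable w μ)
    (hw0 : ∀ x, w x ≠ 0) (hw_top : ∀ x, w x ≠ ⊤) :
    (∫⁻ x, f x ∂μ) ^ 2 ≤ (∫⁻ x, (w x)⁻¹ ∂μ) * ∫⁻ x, w x * f x ^ 2 ∂μ := by
  have hsq : ∀ a : ℝ≥0∞, (a ^ (2⁻¹ : ℝ)) ^ 2 = a := fun a => by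
    rw [← ENNReal.rpow_two, ← ENNReal.rpow_mul]; norm_num
  -- Hölder with `p = q = 2` applied to `f = w^{-1/2} · (w^{1/2} f)`
  have hsplit : ∀ x, f x = (w x)⁻¹ ^ (2⁻¹ : ℝ) * (w x ^ (2⁻¹ : ℝ) * f x) := fun x => by
    rw [← mul_assoc, ← ENNReal.mul_rpow_of_nonneg _ _ (by norm_num),
      ENNReal.inv_mul_cancel (hw0 x) (hw_top x), ENNReal.one_rpow, one_mul]
  have holder : ∫⁻ x, f x ∂μ ≤
      (∫⁻ x, (w x)⁻¹ ∂μ) ^ (2⁻¹ : ℝ) * (∫⁻ x, w x * f x ^ 2 ∂μ) ^ (2⁻¹ : ℝ) := by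
    rw [lintegral_congr hsplit]
    convert ENNReal.lintegral_mul_le_Lp_mul_Lq μ Real.HolderConjugate.two_two
      (hw.inv.pow_const (2⁻¹ : ℝ)) ((hw.pow_const (2⁻¹ : ℝ)).mul hf) using 4 <;>
    simp [mul_pow, hsq]
  calc (∫⁻ x, f x ∂μ) ^ 2
      ≤ ((∫⁻ x, (w x)⁻¹ ∂μ) ^ (2⁻¹ : ℝ) * (∫⁻ x, w x * f x ^ 2 ∂μ) ^ (2⁻¹ : ℝ)) ^ 2 := by
        gcongr
    _ = (∫⁻ x, (w x)⁻¹ ∂μ) * ∫⁻ x, w x * f x ^ 2 ∂μ := by rw [mul_pow, hsq, hsq]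

theorem lintegral_Ioi_exp_neg_mul {β : ℝ} (hβ : 0 < β) (t : ℝ) :
    ∫⁻ s in Ioi t, ENNReal.ofReal (exp (-β * s)) = ENNReal.ofReal (exp (-β * t) / β) := by
  rw [← ofReal_integral_eq_lintegral_ofReal (exp_neg_integrableOn_Ioi t hβ)
      (Filter.Eventually.of_forall fun s => (exp_pos _).le),
    integral_exp_mul_Ioi (neg_lt_zero.2 hβ), neg_div_neg_eq]

theorem ofReal_exp_mul_norm_setIntegral_sq_le {E : Type*} [NormedAddCommGroup E]
    [NormedSpace ℝ E] {β t : ℝ} (hβ : 0 < β) {S : Set ℝ} (hS : S ⊆ Ici t) (g : ℝ → E) :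
    ENNReal.ofReal (exp (β * t) * ‖∫ s in S, g s‖ ^ 2)
      ≤ ENNReal.ofReal (1 / β) * ∫⁻ s in S, ENNReal.ofReal (exp (β * s) * ‖g s‖ ^ 2) := by
  by_cases hg : AEStronglyMeasurable g (volume.restrict S)
  swap
  -- a non-measurable `g` is not integrable, so its Bochner integral is `0`
  · simp [integral_undef fun h => hg h.1]
  have hofReal : ∀ (r : ℝ) (x : E),
      ENNReal.ofReal (exp r * ‖x‖ ^ 2) = ENNReal.ofReal (exp r) * ‖x‖ₑ ^ 2 := fun r x => by
    rw [ENNReal.ofReal_mul (exp_pos _).le, ENNReal.ofReal_pow (norm_nonneg _), ofReal_norm]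
  have hweight : ∫⁻ s in S, (ENNReal.ofReal (exp (β * s)))⁻¹
      ≤ ENNReal.ofReal (exp (-β * t) / β) := calc
    _ = ∫⁻ s in S, ENNReal.ofReal (exp (-β * s)) := lintegral_congr fun s => by
        rw [← ENNReal.ofReal_inv_of_pos (exp_pos _), ← exp_neg, neg_mul]
    _ ≤ ∫⁻ s in Ioi t, ENNReal.ofReal (exp (-β * s)) :=
        lintegral_mono_set' (hS.eventuallyLE.trans Ioi_ae_eq_Ici.symm.le)
    _ = ENNReal.ofReal (exp (-β * t) / β) := lintegral_Ioi_exp_neg_mul hβ t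
  have hcs := ENNReal.sq_lintegral_le_lintegral_inv_mul_lintegral_mul_sq hg.enorm
    (by fun_prop : Measurable fun s => ENNReal.ofReal (exp (β * s))).aemeasurable
    (fun s => by simpa using exp_pos (β * s)) (fun _ => ENNReal.ofReal_ne_top)
  simp only [← hofReal] at hcs
  calc ENNReal.ofReal (exp (β * t) * ‖∫ s in S, g s‖ ^ 2)
      = ENNReal.ofReal (exp (β * t)) * ‖∫ s in S, g s‖ₑ ^ 2 := hofReal _ _
    _ ≤ ENNReal.ofReal (exp (β * t)) * (∫⁻ s in S, ‖g s‖ₑ) ^ 2 := by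
        gcongr; exact enorm_integral_le_lintegral_enorm g
    _ ≤ ENNReal.ofReal (exp (β * t)) * (ENNReal.ofReal (exp (-β * t) / β)
          * ∫⁻ s in S, ENNReal.ofReal (exp (β * s) * ‖g s‖ ^ 2)) := by
        gcongr; exact hcs.trans (by gcongr)
    _ = ENNReal.ofReal (1 / β) * ∫⁻ s in S, ENNReal.ofReal (exp (β * s) * ‖g s‖ ^ 2) := by
        rw [← mul_assoc, ← ENNReal.ofReal_mul (exp_pos _).le, mul_div_assoc', ← exp_add]
        simp

theorem statement_10_general {k : ℕ} (T β : ℝ) (hβ : 0 < β)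
    (f : ℝ → ℝ → EuclideanSpace ℝ (Fin k)) :
    (∫⁻ t in Set.Icc 0 T,
        ENNReal.ofReal (Real.exp (β * t) * ‖∫ s in Set.Icc t T, f t s‖ ^ 2))
      ≤ ENNReal.ofReal (1 / β) *
        ∫⁻ t in Set.Icc 0 T, ∫⁻ s in Set.Icc t T,
          ENNReal.ofReal (Real.exp (β * s) * ‖f t s‖ ^ 2) := by
  rw [← lintegral_const_mul' _ _ ENNReal.ofReal_ne_top]
  exact lintegral_mono fun t =>
    ofReal_exp_mul_norm_setIntegral_sq_le hβ Icc_subset_Ici_self (f t)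

theorem statement_10 {k : ℕ} (T β : ℝ) (hT : 0 < T) (hβ : 0 < β)
    (f : ℝ → ℝ → EuclideanSpace ℝ (Fin k))
    (hmeas : Measurable fun p : ℝ × ℝ => f p.1 p.2)
    (hfin : (∫⁻ t in Set.Icc 0 T, ∫⁻ s in Set.Icc t T,
        ENNReal.ofReal (Real.exp (β * s) * ‖f t s‖ ^ 2)) < ⊤) :
    (∫⁻ t in Set.Icc 0 T,
        ENNReal.ofReal (Real.exp (β * t) * ‖∫ s in Set.Icc t T, f t s‖ ^ 2))
      ≤ ENNReal.ofReal (1 / β) *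
        ∫⁻ t in Set.Icc 0 T, ∫⁻ s in Set.Icc t T,
          ENNReal.ofReal (Real.exp (β * s) * ‖f t s‖ ^ 2) :=
  statement_10_general T β hβ f
end
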